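/- Let Σ = {a < b < c} and suppose w = xαβyβα and w' = xβαyαβ for some distinct letters α, β ∈ Σ and words x, y ∈ Σ*. If x and y have the same Parikh vector, i.e., |x|_a = |y|_a, |x|_b = |y|_b and |x|_c = |y|_c, then the circular words [w] and [w'] are M-equivalent: Ψ_Σ([w]) = Ψ_Σ([w']). -/

import Mathlib

/-- The number of occurrences of `v` as a scattered subword (subsequence) of `w`:
the number of strictly increasing sequences of positions in `w` spelling out `v`. -/
def subwordCount {α : Type*} [DecidableEq α] (w v : List α) : ℕ :=
  w.sublists.count v

/-- The conjugacy class (circular word) `[w]` of `w`: the set of all cyclic shifts of `w`. -/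
def conjClass {α : Type*} [DecidableEq α] (w : List α) : Finset (List α) :=
  insert w ((Finset.range w.length).image w.rotate)

/-- The average subword count of `v` in the circular word `[w]`:
`|[w]|_v = (1/|[w]|) ∑_{u ∈ [w]} |u|_v`. -/
def circCount {α : Type*} [DecidableEq α] (w v : List α) : ℚ :=
  (∑ u ∈ conjClass w, (subwordCount u v : ℚ)) / ((conjClass w).card : ℚ)

/-- The Parikh matrix of the letter `q` of the ordered alphabet `Fin s`:
the identity matrix with an extra `1` in entry `(q, q+1)`. -/
def parikhLetter {s : ℕ} (q : Fin s) : Matrix (Fin (s + 1)) (Fin (s + 1)) ℚ :=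
  1 + Matrix.single q.castSucc q.succ 1

/-- The Parikh matrix mapping over the ordered alphabet `Fin s` (a monoid morphism). -/
def parikhMatrix {s : ℕ} (w : List (Fin s)) : Matrix (Fin (s + 1)) (Fin (s + 1)) ℚ :=
  (w.map parikhLetter).prod

/-- The Parikh matrix of the circular word `[w]`:
`Ψ([w]) = (1/|[w]|) ∑_{u ∈ [w]} Ψ(u)`. -/
def circParikh {s : ℕ} (w : List (Fin s)) : Matrix (Fin (s + 1)) (Fin (s + 1)) ℚ :=
  (((conjClass w).card : ℚ))⁻¹ • ∑ u ∈ conjClass w, parikhMatrix u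

/-- The alternate matrix: `(i,j)` entry is `(-1)^(i+j)` times the `(i,j)` entry of `A`. -/
def altMatrix {n : ℕ} (A : Matrix (Fin n) (Fin n) ℚ) : Matrix (Fin n) (Fin n) ℚ :=
  Matrix.of fun i j => (-1 : ℚ) ^ (i.val + j.val) * A i j

/-- The word `a_i a_{i+1} ⋯ a_j` over the ordered alphabet `Fin s`. -/
def segWord {s : ℕ} (i j : Fin s) : List (Fin s) :=
  (List.range (j.val - i.val + 1)).attach.map fun t =>
    ⟨i.val + t.1, by
      have ht := List.mem_range.mp t.2
      have hi := i.isLt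
      have hj := j.isLt
      omega⟩

/-!
Averaging over the `n` rotations of `w` instead of over its conjugacy class, `n • Ψ([w])` is the
sum of `Ψ(w_{≥i}) Ψ(w_{<i})` over the cut points `i` of `w`. For `w = x p y q`, grouping the cut
points by the factor they fall in gives four sums `Σ Ψ(s) Z Ψ(t)` over the factorisations
`u = t s` of one factor `u`, where `Z` is the Parikh matrix of the three other factors in cyclic
order. Over three letters, if `p` is a permutation of `q` then `Ψ(p v q) - Ψ(q v p)` vanishes
outside the corner entry `(0, 3)`, and that entry depends on `v` only through its Parikh vector.
Corner matrices are fixed by multiplication with unitriangular matrices on either side, so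
exchanging `p` and `q` changes the four sums by `|x| δ`, `|p| δ'`, `-|y| δ` and `-|q| δ'` times the
corner matrix, which cancel when `x` is a permutation of `y`.
-/

open Finset

section ParikhMatrix

variable {s : ℕ}

theorem parikhMatrix_cons (a : Fin s) (u : List (Fin s)) :
    parikhMatrix (a :: u) = parikhLetter a * parikhMatrix u := by
  simp [parikhMatrix]

theorem parikhMatrix_append (u v : List (Fin s)) :
    parikhMatrix (u ++ v) = parikhMatrix u * parikhMatrix v := by
  simp [parikhMatrix]

theorem parikhMatrix_mul_single_zero_last (u : List (Fin s)) (c : ℚ) :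
    parikhMatrix u * Matrix.single 0 (Fin.last s) c = Matrix.single 0 (Fin.last s) c := by
  induction u with
  | nil => exact Matrix.one_mul _
  | cons a u ih =>
    rw [parikhMatrix_cons, Matrix.mul_assoc, ih, parikhLetter, Matrix.add_mul, Matrix.one_mul,
      Matrix.single_mul_single_of_ne (h := Fin.succ_ne_zero a), add_zero]

theorem single_zero_last_mul_parikhMatrix (u : List (Fin s)) (c : ℚ) :
    Matrix.single (0 : Fin (s + 1)) (Fin.last s) c * parikhMatrix u =
      Matrix.single 0 (Fin.last s) c := by
  induction u with
  | nil => exact Matrix.mul_one _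
  | cons a u ih =>
    rw [parikhMatrix_cons, ← Matrix.mul_assoc, parikhLetter, Matrix.mul_add, Matrix.mul_one,
      Matrix.single_mul_single_of_ne (h := (Fin.castSucc_lt_last a).ne'), add_zero, ih]

def parikhCutSum (u : List (Fin s)) (Z : Matrix (Fin (s + 1)) (Fin (s + 1)) ℚ) :
    Matrix (Fin (s + 1)) (Fin (s + 1)) ℚ :=
  ∑ i ∈ range u.length, parikhMatrix (u.drop i) * Z * parikhMatrix (u.take i)

theorem parikhCutSum_append (u v : List (Fin s)) (Z : Matrix (Fin (s + 1)) (Fin (s + 1)) ℚ) :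
    parikhCutSum (u ++ v) Z =
      parikhCutSum u (parikhMatrix v * Z) + parikhCutSum v (Z * parikhMatrix u) := by
  rw [parikhCutSum, List.length_append, sum_range_add]
  congr 1
  · refine sum_congr rfl fun i hi => ?_
    have hi : i ≤ u.length := (mem_range.mp hi).le
    rw [List.drop_append_of_le_length hi, List.take_append_of_le_length hi, parikhMatrix_append]
    simp only [Matrix.mul_assoc]
  · refine sum_congr rfl fun i _ => ?_
    rw [List.drop_length_add_append, List.take_length_add_append, parikhMatrix_append]
    simp only [Matrix.mul_assoc]

theorem parikhCutSum_sub (u : List (Fin s)) (Z Z' : Matrix (Fin (s + 1)) (Fin (s + 1)) ℚ) :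
    parikhCutSum u Z - parikhCutSum u Z' = parikhCutSum u (Z - Z') := by
  simp only [parikhCutSum, ← sum_sub_distrib, Matrix.mul_sub, Matrix.sub_mul]

theorem parikhCutSum_single_zero_last (u : List (Fin s)) (c : ℚ) :
    parikhCutSum u (Matrix.single 0 (Fin.last s) c) =
      u.length • Matrix.single 0 (Fin.last s) c := by
  simp only [parikhCutSum, parikhMatrix_mul_single_zero_last, single_zero_last_mul_parikhMatrix,
    sum_const, card_range]

theorem sum_parikhMatrix_rotate (w : List (Fin s)) :
    ∑ i ∈ range w.length, parikhMatrix (w.rotate i) = parikhCutSum w 1 := by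
  refine sum_congr rfl fun i hi => ?_
  rw [List.rotate_eq_drop_append_take (mem_range.mp hi).le, parikhMatrix_append, Matrix.mul_one]

theorem sum_parikhMatrix_rotate_append_four (x p y q : List (Fin s)) :
    ∑ i ∈ range (x ++ p ++ y ++ q).length, parikhMatrix ((x ++ p ++ y ++ q).rotate i) =
      parikhCutSum x (parikhMatrix p * parikhMatrix y * parikhMatrix q) +
      parikhCutSum p (parikhMatrix y * parikhMatrix q * parikhMatrix x) +
      parikhCutSum y (parikhMatrix q * parikhMatrix x * parikhMatrix p) +
      parikhCutSum q (parikhMatrix x * parikhMatrix p * parikhMatrix y) := by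
  simp only [sum_parikhMatrix_rotate, parikhCutSum_append, parikhMatrix_append, Matrix.one_mul,
    Matrix.mul_one, Matrix.mul_assoc]

end ParikhMatrix

section Rotation

variable {α : Type*}

theorem mem_conjClass [DecidableEq α] {u w : List α} : u ∈ conjClass w ↔ u ~r w := by
  rw [conjClass, mem_insert, mem_image, List.isRotated_comm]
  constructor
  · rintro (rfl | ⟨k, -, rfl⟩)
    exacts [List.IsRotated.refl _, ⟨k, rfl⟩]
  · rintro ⟨k, rfl⟩
    rcases eq_or_ne w [] with rfl | hw
    · simp
    · exact Or.inr ⟨k % w.length, mem_range.mpr (Nat.mod_lt _ (List.length_pos_iff.mpr hw)),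
        w.rotate_mod k⟩

theorem sum_range_rotate_rotate {M : Type*} [AddCommMonoid M] (f : List α → M) (w : List α)
    (k : ℕ) :
    ∑ i ∈ range w.length, f ((w.rotate k).rotate i) = ∑ i ∈ range w.length, f (w.rotate i) := by
  induction k with
  | zero => simp
  | succ k ih =>
    rw [← ih]
    have hshift : ∀ i, (w.rotate (k + 1)).rotate i = (w.rotate k).rotate (i + 1) := fun i => by
      simp only [List.rotate_rotate, Nat.add_comm 1 i, Nat.add_assoc]
    simp only [hshift]
    rcases hn : w.length with _ | n
    · rfl
    · have hlen : ((w.rotate k).rotate (n + 1)) = w.rotate k := by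
        rw [← hn, ← w.length_rotate k, List.rotate_length]
      rw [sum_range_succ, hlen, sum_range_succ' _ n, List.rotate_zero]

theorem sum_conjClass_rotate [DecidableEq α] {M : Type*} [AddCommMonoid M] (f : List α → M)
    (w : List α) (i : ℕ) : ∑ u ∈ conjClass w, f (u.rotate i) = ∑ u ∈ conjClass w, f u := by
  have himage : (conjClass w).image (·.rotate i) = conjClass w := by
    refine eq_of_subset_of_card_le (image_subset_iff.mpr fun u hu => ?_)
      (card_image_of_injective _ (List.rotate_injective i)).ge
    exact mem_conjClass.mpr ((List.IsRotated.forall u i).trans (mem_conjClass.mp hu))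
  calc ∑ u ∈ conjClass w, f (u.rotate i)
      = ∑ u ∈ (conjClass w).image (·.rotate i), f u :=
        (sum_image fun u _ v _ h => List.rotate_injective i h).symm
    _ = ∑ u ∈ conjClass w, f u := by rw [himage]

theorem card_conjClass_smul_sum_rotate [DecidableEq α] {M : Type*} [AddCommMonoid M]
    (f : List α → M) (w : List α) :
    (conjClass w).card • ∑ i ∈ range w.length, f (w.rotate i) =
      w.length • ∑ u ∈ conjClass w, f u :=
  calc (conjClass w).card • ∑ i ∈ range w.length, f (w.rotate i)
      = ∑ u ∈ conjClass w, ∑ i ∈ range w.length, f (u.rotate i) := by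
        rw [← sum_const]
        refine sum_congr rfl fun u hu => ?_
        obtain ⟨k, rfl⟩ := (mem_conjClass.mp hu).symm
        rw [sum_range_rotate_rotate]
    _ = ∑ i ∈ range w.length, ∑ u ∈ conjClass w, f (u.rotate i) := sum_comm
    _ = w.length • ∑ u ∈ conjClass w, f u := by
        simp only [sum_conjClass_rotate, sum_const, card_range]

end Rotation

section CircularParikhMatrix

variable {s : ℕ}

theorem circParikh_eq_smul_sum_rotate {w : List (Fin s)} (hw : w ≠ []) :
    circParikh w = (w.length : ℚ)⁻¹ • ∑ i ∈ range w.length, parikhMatrix (w.rotate i) := by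
  have hcard : ((conjClass w).card : ℚ) ≠ 0 :=
    Nat.cast_ne_zero.mpr (card_ne_zero_of_mem (mem_insert_self w _))
  have hlen : (w.length : ℚ) ≠ 0 := Nat.cast_ne_zero.mpr (List.length_pos_iff.mpr hw).ne'
  have h := card_conjClass_smul_sum_rotate parikhMatrix w
  rw [← Nat.cast_smul_eq_nsmul ℚ, ← Nat.cast_smul_eq_nsmul ℚ] at h
  rw [circParikh, inv_smul_eq_iff₀ hcard, smul_comm, h, inv_smul_smul₀ hlen]

theorem circParikh_eq_of_sum_rotate_eq {w w' : List (Fin s)} (hlen : w.length = w'.length)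
    (hsum : ∑ i ∈ range w.length, parikhMatrix (w.rotate i) =
      ∑ i ∈ range w'.length, parikhMatrix (w'.rotate i)) :
    circParikh w = circParikh w' := by
  rcases eq_or_ne w [] with rfl | hw
  · rw [List.eq_nil_of_length_eq_zero hlen.symm]
  · have hw' : w' ≠ [] := List.ne_nil_of_length_pos (hlen ▸ List.length_pos_iff.mpr hw)
    rw [circParikh_eq_smul_sum_rotate hw, circParikh_eq_smul_sum_rotate hw', hsum, hlen]

end CircularParikhMatrix

section Ternary

-- Typed over `Fin (3 + 1)` rather than `Fin 4` so that it matches `parikhMatrix` for simp.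
def upperUnitri (a b c p q r : ℚ) : Matrix (Fin (3 + 1)) (Fin (3 + 1)) ℚ :=
  !![1, a, p, r; 0, 1, b, q; 0, 0, 1, c; 0, 0, 0, 1]

theorem upperUnitri_mul (a b c p q r a' b' c' p' q' r' : ℚ) :
    upperUnitri a b c p q r * upperUnitri a' b' c' p' q' r' =
      upperUnitri (a + a') (b + b') (c + c') (p + p' + a * b') (q + q' + b * c')
        (r + r' + a * q' + p * c') := by
  ext i j
  fin_cases i <;> fin_cases j <;> simp [upperUnitri, Matrix.mul_apply, Fin.sum_univ_four] <;> ring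

theorem parikhLetter_eq_upperUnitri (a : Fin 3) :
    parikhLetter a = upperUnitri ([a].count 0) ([a].count 1) ([a].count 2) 0 0 0 := by
  ext i j
  fin_cases a <;> fin_cases i <;> fin_cases j <;> simp [parikhLetter, upperUnitri]

theorem exists_parikhMatrix_eq_upperUnitri (u : List (Fin 3)) :
    ∃ p q r, parikhMatrix u = upperUnitri (u.count 0) (u.count 1) (u.count 2) p q r := by
  induction u with
  | nil =>
    refine ⟨0, 0, 0, ?_⟩
    ext i j
    fin_cases i <;> fin_cases j <;> simp [parikhMatrix, upperUnitri]
  | cons a u ih =>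
    obtain ⟨p, q, r, hu⟩ := ih
    rw [parikhMatrix_cons, hu, parikhLetter_eq_upperUnitri, upperUnitri_mul,
      show a :: u = [a] ++ u from rfl]
    simp only [List.count_append, Nat.cast_add]
    exact ⟨_, _, _, rfl⟩

def swapDefect (p q v : List (Fin 3)) : ℚ :=
  (q.count 0 + v.count 0) * (parikhMatrix q 1 3 - parikhMatrix p 1 3) +
    (q.count 2 + v.count 2) * (parikhMatrix p 0 2 - parikhMatrix q 0 2)

theorem parikhMatrix_mul_mul_sub_swap {p q : List (Fin 3)} (hpq : p.Perm q) (v : List (Fin 3)) :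
    parikhMatrix p * parikhMatrix v * parikhMatrix q -
        parikhMatrix q * parikhMatrix v * parikhMatrix p =
      Matrix.single 0 (Fin.last 3) (swapDefect p q v) := by
  obtain ⟨p₁, q₁, r₁, hp⟩ := exists_parikhMatrix_eq_upperUnitri p
  obtain ⟨p₂, q₂, r₂, hq⟩ := exists_parikhMatrix_eq_upperUnitri q
  obtain ⟨p₃, q₃, r₃, hv⟩ := exists_parikhMatrix_eq_upperUnitri v
  simp only [hpq.count_eq] at hp
  simp only [swapDefect, hp, hq, hv, upperUnitri_mul]
  ext i j
  fin_cases i <;> fin_cases j <;> simp [upperUnitri] <;> ring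

theorem parikhCutSum_swap (u : List (Fin 3)) {p q : List (Fin 3)} (hpq : p.Perm q)
    (v : List (Fin 3)) :
    parikhCutSum u (parikhMatrix p * parikhMatrix v * parikhMatrix q) =
      parikhCutSum u (parikhMatrix q * parikhMatrix v * parikhMatrix p) +
        u.length • Matrix.single 0 (Fin.last 3) (swapDefect p q v) := by
  rw [← parikhCutSum_single_zero_last, ← parikhMatrix_mul_mul_sub_swap hpq, ← parikhCutSum_sub,
    add_sub_cancel]

theorem circParikh_append_swap {x y p q : List (Fin 3)} (hxy : x.Perm y) (hpq : p.Perm q) :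
    circParikh (x ++ p ++ y ++ q) = circParikh (x ++ q ++ y ++ p) := by
  refine circParikh_eq_of_sum_rotate_eq (by simp [hpq.length_eq]) ?_
  rw [sum_parikhMatrix_rotate_append_four, sum_parikhMatrix_rotate_append_four,
    parikhCutSum_swap x hpq y, parikhCutSum_swap p hxy.symm q, parikhCutSum_swap y hpq x,
    parikhCutSum_swap q hxy.symm p]
  have hx : swapDefect p q x = swapDefect p q y := by simp only [swapDefect, hxy.count_eq]
  have hp : swapDefect y x p = swapDefect y x q := by simp only [swapDefect, hpq.count_eq]
  rw [hx, hp, hxy.length_eq, hpq.length_eq]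
  abel

end Ternary

theorem stmt_19_general (α β : Fin 3) (x y : List (Fin 3))
    (h : ∀ γ : Fin 3, x.count γ = y.count γ) :
    circParikh (x ++ [α, β] ++ y ++ [β, α]) = circParikh (x ++ [β, α] ++ y ++ [α, β]) :=
  circParikh_append_swap (List.perm_iff_count.mpr h) (List.Perm.swap β α [])

/-- Corollary 36: over `{a < b < c} = Fin 3`, if `w = xαβyβα` and `w' = xβαyαβ` for distinct
letters `α, β` and words `x, y` with the same Parikh vector, then `[w] ≡_M [w']`. -/
theorem stmt_19 (α β : Fin 3) (hαβ : α ≠ β) (x y : List (Fin 3))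
    (h : ∀ γ : Fin 3, x.count γ = y.count γ) :
    circParikh (x ++ [α, β] ++ y ++ [β, α]) = circParikh (x ++ [β, α] ++ y ++ [α, β]) :=
  stmt_19_general α β x y h
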